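/- Let G be a connected undirected graph on N ≥ 2 vertices with incidence matrix D(G) and Laplacian L(G) = D(G) D(G)^T with second smallest eigenvalue λ₂(G) > 0. Let v_max > 0, K₁ = λ₂(G)²/(2(N−1)) and K₂ = 2 √N (N−1) ‖D(G)^T‖ / λ₂(G)². For x = (x₁,…,x_N) ∈ ℝ^{Nn} and v = (v₁,…,v_N) ∈ ℝ^{Nn} with ‖v_i‖ ≤ v_max for all i, and with c(x,k) ∈ ℝᴺ denoting the vector of k-th coordinates of the blocks x₁,…,x_N, the following inequality holds: ∑_{k=1}^{n} ⟨ L(G) c(x,k), −L(G) c(x,k) + c(v,k) ⟩ ≤ −K₁ ‖x̃‖ ( ‖x̃‖ − K₂ v_max ), where x̃ = D(G)^T x applied componentwise in each of the n coordinates. -/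

import Mathlib

open scoped BigOperators
open Matrix

/-- The oriented incidence matrix of a graph whose `m` edges are enumerated by
the endpoint maps `a b : Fin m → Fin N` (edge `e` goes from `a e` to `b e`). -/
noncomputable def incidenceMat {N m : ℕ} (a b : Fin m → Fin N) :
    Matrix (Fin N) (Fin m) ℝ :=
  Matrix.of fun i e => if i = a e then 1 else if i = b e then -1 else 0

/-- The operator norm (induced by the Euclidean norms) of a real matrix. -/
noncomputable def matOpNorm {N m : ℕ} (A : Matrix (Fin N) (Fin m) ℝ) : ℝ :=
  ‖LinearMap.toContinuousLinearMap (Matrix.toEuclideanLin A)‖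

/-! For each coordinate `k` put `y = c(x,k)` and let `z` be `y` minus its mean; this changes
neither `Dᵀy` nor `Ly`, so the variational bound `λ₂‖z‖² ≤ ⟨z, Lz⟩ = ‖Dᵀz‖²`, the degree bound
`‖Dᵀz‖² ≤ 2(N-1)‖z‖²` and Cauchy–Schwarz `‖Dᵀz‖⁴ ≤ ‖z‖²‖Lz‖²` give
`λ₂²‖Dᵀy‖² ≤ 2(N-1)‖Ly‖²`; summed over `k` this is `K₁‖x̃‖² ≤ ∑ₖ‖L c(x,k)‖²`.
The cross term is `∑ₖ⟨Dᵀc(v,k), Dᵀc(x,k)⟩ ≤ ‖Dᵀ‖ √N vmax ‖x̃‖ = K₁K₂ vmax ‖x̃‖`. -/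

open Finset

-- The scalar core of the spectral estimate, for `t = ‖z‖²`, `s = ‖Aᵀz‖²`, `Q = ‖AAᵀz‖²`.
lemma sq_mul_le_mul_of_sq_le_mul {lam C s t Q : ℝ} (hlam : 0 ≤ lam) (hC : 0 ≤ C) (hQ : 0 ≤ Q)
    (ht : 0 ≤ t) (hlow : lam * t ≤ s) (hup : s ≤ C * t) (hcs : s ^ 2 ≤ t * Q) :
    lam ^ 2 * s ≤ C * Q := by
  rcases ht.lt_or_eq with ht | rfl
  · have hlt : lam ^ 2 * t ≤ Q := by
      have : (lam * t) ^ 2 ≤ s ^ 2 := pow_le_pow_left₀ (by positivity) hlow 2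
      nlinarith
    calc lam ^ 2 * s ≤ lam ^ 2 * (C * t) := by gcongr
      _ = C * (lam ^ 2 * t) := by ring
      _ ≤ C * Q := by gcongr
  · have hs : s = 0 := by nlinarith
    simp [hs, mul_nonneg hC hQ]

lemma sum_sum_mul_le_sqrt_mul_sqrt {ι κ : Type*} [Fintype ι] [Fintype κ] (f g : ι → κ → ℝ) :
    ∑ i, ∑ j, f i j * g i j ≤ √(∑ i, ∑ j, f i j ^ 2) * √(∑ i, ∑ j, g i j ^ 2) := by
  simp only [← Fintype.sum_prod_type']
  exact Real.sum_mul_le_sqrt_mul_sqrt _ _ _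

lemma sum_sum_sq_eq_sum_norm_sq {ι : Type*} [Fintype ι] {n : ℕ}
    (w : ι → EuclideanSpace ℝ (Fin n)) : ∑ k, ∑ i, w i k ^ 2 = ∑ i, ‖w i‖ ^ 2 := by
  rw [Finset.sum_comm]
  simp [EuclideanSpace.norm_sq_eq]

lemma sqrt_sum_norm_sq_le {ι E : Type*} [Fintype ι] [Nonempty ι] [SeminormedAddGroup E]
    {w : ι → E} {C : ℝ} (hw : ∀ i, ‖w i‖ ≤ C) : √(∑ i, ‖w i‖ ^ 2) ≤ √(Fintype.card ι) * C := by
  have hC : 0 ≤ C := (norm_nonneg _).trans (hw (Classical.arbitrary ι))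
  rw [← Real.sqrt_sq hC, ← Real.sqrt_mul (Nat.cast_nonneg _)]
  gcongr
  calc ∑ i, ‖w i‖ ^ 2 ≤ ∑ _i : ι, C ^ 2 := by gcongr with i; exact hw i
    _ = Fintype.card ι * C ^ 2 := by simp

section Matrix

variable {n p q : ℕ}

lemma matOpNorm_nonneg (A : Matrix (Fin p) (Fin q) ℝ) : 0 ≤ matOpNorm A := norm_nonneg _

lemma dotProduct_mul_transpose_mulVec (A : Matrix (Fin p) (Fin q) ℝ) (y z : Fin p → ℝ) :
    z ⬝ᵥ (A * Aᵀ) *ᵥ y = (Aᵀ *ᵥ z) ⬝ᵥ (Aᵀ *ᵥ y) := by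
  rw [← mulVec_mulVec, dotProduct_mulVec, ← mulVec_transpose]

lemma sum_sq_mulVec_le_matOpNorm (A : Matrix (Fin p) (Fin q) ℝ) (w : Fin q → ℝ) :
    ∑ i, (A *ᵥ w) i ^ 2 ≤ matOpNorm A ^ 2 * ∑ j, w j ^ 2 := by
  have hsq : ∀ {r : ℕ} (u : Fin r → ℝ), ‖WithLp.toLp 2 u‖ ^ 2 = ∑ i, u i ^ 2 := fun u => by
    simp [EuclideanSpace.norm_sq_eq]
  have h := (LinearMap.toContinuousLinearMap (toEuclideanLin A)).le_opNorm (WithLp.toLp 2 w)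
  have h2 := pow_le_pow_left₀ (norm_nonneg _) h 2
  rwa [mul_pow, LinearMap.coe_toContinuousLinearMap', toLpLin_toLp, hsq, hsq] at h2

lemma sum_dotProduct_mul_transpose_mulVec_le (A : Matrix (Fin p) (Fin q) ℝ)
    (y z : Fin n → Fin p → ℝ) :
    ∑ k, z k ⬝ᵥ (A * Aᵀ) *ᵥ y k ≤
      matOpNorm Aᵀ * √(∑ k, ∑ i, z k i ^ 2) * √(∑ k, ∑ e, (Aᵀ *ᵥ y k) e ^ 2) := by
  simp only [dotProduct_mul_transpose_mulVec]
  refine (sum_sum_mul_le_sqrt_mul_sqrt _ _).trans ?_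
  gcongr
  calc √(∑ k, ∑ e, (Aᵀ *ᵥ z k) e ^ 2) ≤ √(matOpNorm Aᵀ ^ 2 * ∑ k, ∑ i, z k i ^ 2) := by
        rw [Finset.mul_sum]
        gcongr with k
        exact sum_sq_mulVec_le_matOpNorm _ _
    _ = matOpNorm Aᵀ * √(∑ k, ∑ i, z k i ^ 2) := by
        rw [Real.sqrt_mul (sq_nonneg _), Real.sqrt_sq (matOpNorm_nonneg _)]

lemma sq_mul_sum_sq_transpose_mulVec_le {A : Matrix (Fin p) (Fin q) ℝ} {lam C : ℝ}
    (hlam : 0 ≤ lam) (hC : 0 ≤ C) (hker : Aᵀ *ᵥ (fun _ => 1) = 0)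
    (hvar : ∀ y : Fin p → ℝ, ∑ i, y i = 0 → lam * ∑ i, y i ^ 2 ≤ y ⬝ᵥ (A * Aᵀ) *ᵥ y)
    (hbound : ∀ y, ∑ e, (Aᵀ *ᵥ y) e ^ 2 ≤ C * ∑ i, y i ^ 2) (y : Fin p → ℝ) :
    lam ^ 2 * ∑ e, (Aᵀ *ᵥ y) e ^ 2 ≤ C * ∑ i, ((A * Aᵀ) *ᵥ y) i ^ 2 := by
  set z : Fin p → ℝ := y - (∑ i, y i / p) • fun _ => 1
  have hz : ∑ i, z i = 0 := by
    rcases Nat.eq_zero_or_pos p with rfl | hp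
    · simp
    · simp [z, Finset.sum_sub_distrib, ← Finset.sum_div]
      field_simp
      ring
  have hAz : Aᵀ *ᵥ z = Aᵀ *ᵥ y := by
    simp [z, mulVec_sub, mulVec_smul, hker]
  have hLz : (A * Aᵀ) *ᵥ z = (A * Aᵀ) *ᵥ y := by
    rw [← mulVec_mulVec, ← mulVec_mulVec, hAz]
  have hs : z ⬝ᵥ (A * Aᵀ) *ᵥ z = ∑ e, (Aᵀ *ᵥ y) e ^ 2 := by
    rw [dotProduct_mul_transpose_mulVec, hAz]
    simp [dotProduct, sq]
  refine sq_mul_le_mul_of_sq_le_mul hlam hC (by positivity) (by positivity) (hs ▸ hvar z hz)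
    (hAz ▸ hbound z) ?_
  rw [← hs, ← hLz]
  exact Finset.sum_mul_sq_le_sq_mul_sq _ _ _

end Matrix

section Incidence

variable {N m : ℕ} {a b : Fin m → Fin N}

lemma incidenceMat_transpose_mulVec (hne : ∀ e, a e ≠ b e) (y : Fin N → ℝ) :
    (incidenceMat a b)ᵀ *ᵥ y = fun e => y (a e) - y (b e) := by
  ext e
  have hentry : ∀ i, incidenceMat a b i e =
      (if a e = i then 1 else 0) - (if b e = i then 1 else 0) := fun i => by
    by_cases hi : i = a e
    · simp [incidenceMat, hi, (hne e).symm]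
    · by_cases hi' : i = b e <;> simp [incidenceMat, hi, hi', eq_comm, hne e]
  simp [mulVec, dotProduct, hentry, sub_mul, Finset.sum_sub_distrib]

lemma sum_sq_sub_le_of_card_incident_le (hne : ∀ e, a e ≠ b e) {d : ℕ}
    (hdeg : ∀ i, #{e | a e = i ∨ b e = i} ≤ d) (y : Fin N → ℝ) :
    ∑ e, (y (a e) - y (b e)) ^ 2 ≤ 2 * d * ∑ i, y i ^ 2 := by
  classical
  have hends : ∀ e, y (a e) ^ 2 + y (b e) ^ 2 =
      ∑ i, if a e = i ∨ b e = i then y i ^ 2 else 0 := fun e => by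
    rw [← Finset.sum_filter, Finset.filter_or, Finset.filter_eq, Finset.filter_eq,
      if_pos (Finset.mem_univ _), if_pos (Finset.mem_univ _),
      Finset.sum_union (Finset.disjoint_singleton.2 (hne e)), Finset.sum_singleton, Finset.sum_singleton]
  calc ∑ e, (y (a e) - y (b e)) ^ 2 ≤ 2 * ∑ e, (y (a e) ^ 2 + y (b e) ^ 2) := by
        rw [Finset.mul_sum]
        gcongr with e
        nlinarith [sq_nonneg (y (a e) + y (b e))]
    _ = 2 * ∑ i, (#{e | a e = i ∨ b e = i} : ℝ) * y i ^ 2 := by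
        simp_rw [hends]
        rw [Finset.sum_comm]
        simp [Finset.sum_ite, Finset.sum_const]
    _ ≤ 2 * ∑ i, (d : ℝ) * y i ^ 2 := by
        gcongr with i
        exact_mod_cast hdeg i
    _ = 2 * d * ∑ i, y i ^ 2 := by rw [← Finset.mul_sum, mul_assoc]

lemma card_incident_le_sub_one (G : SimpleGraph (Fin N)) (hab : ∀ e, G.Adj (a e) (b e))
    (huniq : ∀ u v : Fin N, G.Adj u v →
      ∃! e : Fin m, (a e = u ∧ b e = v) ∨ (a e = v ∧ b e = u))
    (i : Fin N) : #{e | a e = i ∨ b e = i} ≤ N - 1 := by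
  classical
  have hmaps : ∀ e ∈ ({e | a e = i ∨ b e = i} : Finset (Fin m)),
      s(a e, b e) ∈ G.incidenceFinset i := fun e he => by
    simp only [Finset.mem_filter, Finset.mem_univ, true_and] at he
    simp [SimpleGraph.incidenceSet, hab e]
    tauto
  have hinj : Set.InjOn (fun e => s(a e, b e)) {e | a e = i ∨ b e = i} := by
    intro e _ e' _ h
    exact (huniq _ _ (hab e)).unique (Or.inl ⟨rfl, rfl⟩) (Sym2.eq_iff.1 h.symm)
  calc #{e | a e = i ∨ b e = i} ≤ #(G.incidenceFinset i) :=
        Finset.card_le_card_of_injOn _ hmaps (by simpa using hinj)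
    _ = G.degree i := G.card_incidenceFinset_eq_degree i
    _ ≤ N - 1 := by
        have := G.degree_lt_card_verts i
        rw [Fintype.card_fin] at this
        omega

lemma sq_mul_sum_sq_sub_le_two_mul_sum_sq_laplacian (hN : 1 ≤ N) (G : SimpleGraph (Fin N))
    (hab : ∀ e, G.Adj (a e) (b e))
    (huniq : ∀ u v : Fin N, G.Adj u v →
      ∃! e : Fin m, (a e = u ∧ b e = v) ∨ (a e = v ∧ b e = u))
    {lam : ℝ} (hlam : 0 ≤ lam)
    (hvar : ∀ y : Fin N → ℝ, ∑ i, y i = 0 →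
      lam * ∑ i, y i ^ 2 ≤ y ⬝ᵥ (incidenceMat a b * (incidenceMat a b)ᵀ) *ᵥ y)
    (y : Fin N → ℝ) :
    lam ^ 2 * ∑ e, (y (a e) - y (b e)) ^ 2 ≤
      2 * (N - 1) * ∑ i, ((incidenceMat a b * (incidenceMat a b)ᵀ) *ᵥ y) i ^ 2 := by
  have hne : ∀ e, a e ≠ b e := fun e => (hab e).ne
  have hDt := incidenceMat_transpose_mulVec hne
  have hN1 : (0 : ℝ) ≤ N - 1 := by
    have : (1 : ℝ) ≤ N := by exact_mod_cast hN
    linarith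
  have hbound (z : Fin N → ℝ) :
      ∑ e, ((incidenceMat a b)ᵀ *ᵥ z) e ^ 2 ≤ 2 * (N - 1) * ∑ i, z i ^ 2 := by
    simpa only [hDt, Nat.cast_sub hN, Nat.cast_one] using
      sum_sq_sub_le_of_card_incident_le hne (card_incident_le_sub_one G hab huniq) z
  simpa only [hDt] using sq_mul_sum_sq_transpose_mulVec_le hlam (by linarith)
    (by ext; simp [hDt]) hvar hbound y

lemma sq_div_mul_sum_norm_sq_sub_le_sum_sum_sq_laplacian {n : ℕ} (hN : 2 ≤ N)
    (G : SimpleGraph (Fin N)) (hab : ∀ e, G.Adj (a e) (b e))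
    (huniq : ∀ u v : Fin N, G.Adj u v →
      ∃! e : Fin m, (a e = u ∧ b e = v) ∨ (a e = v ∧ b e = u))
    {lam : ℝ} (hlam : 0 ≤ lam)
    (hvar : ∀ y : Fin N → ℝ, ∑ i, y i = 0 →
      lam * ∑ i, y i ^ 2 ≤ y ⬝ᵥ (incidenceMat a b * (incidenceMat a b)ᵀ) *ᵥ y)
    (x : Fin N → EuclideanSpace ℝ (Fin n)) :
    lam ^ 2 / (2 * (N - 1)) * ∑ e, ‖x (a e) - x (b e)‖ ^ 2 ≤
      ∑ k, ∑ i, ((incidenceMat a b * (incidenceMat a b)ᵀ) *ᵥ fun j => x j k) i ^ 2 := by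
  have hN1 : (0 : ℝ) < N - 1 := by
    have : (2 : ℝ) ≤ N := by exact_mod_cast hN
    linarith
  rw [div_mul_eq_mul_div, div_le_iff₀ (by positivity), ← sum_sum_sq_eq_sum_norm_sq,
    Finset.mul_sum, mul_comm, Finset.mul_sum]
  refine Finset.sum_le_sum fun k _ => ?_
  simpa using sq_mul_sum_sq_sub_le_two_mul_sum_sq_laplacian (by omega) G hab huniq hlam hvar
    (fun j => x j k)

lemma sum_dotProduct_laplacian_le [NeZero N] {n : ℕ} (hne : ∀ e, a e ≠ b e) {C : ℝ}
    (x v : Fin N → EuclideanSpace ℝ (Fin n)) (hv : ∀ i, ‖v i‖ ≤ C) :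
    ∑ k, (fun j => v j k) ⬝ᵥ (incidenceMat a b * (incidenceMat a b)ᵀ) *ᵥ (fun j => x j k) ≤
      matOpNorm (incidenceMat a b)ᵀ * (√N * C) * √(∑ e, ‖x (a e) - x (b e)‖ ^ 2) := by
  have hV : √(∑ k, ∑ i, v i k ^ 2) ≤ √N * C := by
    simpa [sum_sum_sq_eq_sum_norm_sq] using sqrt_sum_norm_sq_le hv
  have hX : √(∑ k, ∑ e, ((incidenceMat a b)ᵀ *ᵥ fun j => x j k) e ^ 2) =
      √(∑ e, ‖x (a e) - x (b e)‖ ^ 2) := by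
    simp [incidenceMat_transpose_mulVec hne, ← sum_sum_sq_eq_sum_norm_sq]
  refine (sum_dotProduct_mul_transpose_mulVec_le _ _ _).trans ?_
  rw [hX]
  gcongr
  exact matOpNorm_nonneg _

end Incidence

theorem statement3_general
    (N m n : ℕ) (hN : 2 ≤ N)
    (G : SimpleGraph (Fin N))
    (a b : Fin m → Fin N)
    (hab : ∀ e, G.Adj (a e) (b e))
    (huniq : ∀ u v : Fin N, G.Adj u v →
      ∃! e : Fin m, (a e = u ∧ b e = v) ∨ (a e = v ∧ b e = u))
    (lam2 : ℝ) (hlam2 : 0 < lam2)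
    (hvar : ∀ y : Fin N → ℝ, (∑ i, y i) = 0 →
      lam2 * (∑ i, (y i) ^ 2) ≤
        ∑ i, y i * ((incidenceMat a b * (incidenceMat a b)ᵀ).mulVec y i))
    (vmax : ℝ)
    (x v : Fin N → EuclideanSpace ℝ (Fin n))
    (hv : ∀ i, ‖v i‖ ≤ vmax) :
    ∑ k : Fin n, ∑ i : Fin N,
        ((incidenceMat a b * (incidenceMat a b)ᵀ).mulVec (fun j => x j k) i) *
          (-((incidenceMat a b * (incidenceMat a b)ᵀ).mulVec (fun j => x j k) i)
            + v i k) ≤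
      -(lam2 ^ 2 / (2 * ((N : ℝ) - 1))) *
        Real.sqrt (∑ e : Fin m, ‖x (a e) - x (b e)‖ ^ 2) *
        (Real.sqrt (∑ e : Fin m, ‖x (a e) - x (b e)‖ ^ 2) -
          (2 * Real.sqrt N * ((N : ℝ) - 1) * matOpNorm (incidenceMat a b)ᵀ / lam2 ^ 2)
            * vmax) := by
  set D := incidenceMat a b
  have hN1 : (0 : ℝ) < N - 1 := by
    have : (2 : ℝ) ≤ N := by exact_mod_cast hN
    linarith
  set X := √(∑ e, ‖x (a e) - x (b e)‖ ^ 2)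
  set Q := ∑ k, ∑ i, ((D * Dᵀ) *ᵥ fun j => x j k) i ^ 2
  have hQ : lam2 ^ 2 / (2 * (N - 1)) * X ^ 2 ≤ Q := by
    rw [Real.sq_sqrt (by positivity)]
    exact sq_div_mul_sum_norm_sq_sub_le_sum_sum_sq_laplacian hN G hab huniq hlam2.le hvar x
  have hcross : ∑ k, (fun j => v j k) ⬝ᵥ (D * Dᵀ) *ᵥ (fun j => x j k) ≤
      matOpNorm Dᵀ * (√N * vmax) * X :=
    have : NeZero N := ⟨by omega⟩
    sum_dotProduct_laplacian_le (fun e => (hab e).ne) x v hv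
  calc _ = -Q + ∑ k, (fun j => v j k) ⬝ᵥ (D * Dᵀ) *ᵥ (fun j => x j k) := by
        simp only [Q, dotProduct, ← Finset.sum_neg_distrib, ← Finset.sum_add_distrib]
        refine Finset.sum_congr rfl fun k _ => Finset.sum_congr rfl fun i _ => ?_
        ring
    _ ≤ -(lam2 ^ 2 / (2 * (N - 1)) * X ^ 2) + matOpNorm Dᵀ * (√N * vmax) * X := by
        linarith
    _ = _ := by
        field_simp
        ring

/-- Lyapunov derivative estimate.  For a connected graph on
`N ≥ 2` vertices with incidence matrix `D`, Laplacian `L = D Dᵀ` and second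
smallest eigenvalue `lam2 > 0` (characterized variationally), constants
`K₁ = lam2²/(2(N-1))` and `K₂ = 2 √N (N-1) ‖Dᵀ‖ / lam2²`, stacked vectors
`x, v ∈ ℝ^{Nn}` with `‖vᵢ‖ ≤ vmax`, and `c(x,k)` the vector of `k`-th
coordinates of the blocks, one has
`∑ₖ ⟨L c(x,k), -L c(x,k) + c(v,k)⟩ ≤ -K₁ ‖x̃‖ (‖x̃‖ - K₂ vmax)`. -/
theorem statement3
    (N m n : ℕ) (hN : 2 ≤ N)
    (G : SimpleGraph (Fin N)) [DecidableRel G.Adj]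
    (hconn : G.Connected)
    (a b : Fin m → Fin N)
    (hab : ∀ e, G.Adj (a e) (b e))
    (huniq : ∀ u v : Fin N, G.Adj u v →
      ∃! e : Fin m, (a e = u ∧ b e = v) ∨ (a e = v ∧ b e = u))
    (lam2 : ℝ) (hlam2 : 0 < lam2)
    (hvar : ∀ y : Fin N → ℝ, (∑ i, y i) = 0 →
      lam2 * (∑ i, (y i) ^ 2) ≤
        ∑ i, y i * ((incidenceMat a b * (incidenceMat a b)ᵀ).mulVec y i))
    (vmax : ℝ) (hvmax : 0 < vmax)
    (x v : Fin N → EuclideanSpace ℝ (Fin n))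
    (hv : ∀ i, ‖v i‖ ≤ vmax) :
    ∑ k : Fin n, ∑ i : Fin N,
        ((incidenceMat a b * (incidenceMat a b)ᵀ).mulVec (fun j => x j k) i) *
          (-((incidenceMat a b * (incidenceMat a b)ᵀ).mulVec (fun j => x j k) i)
            + v i k) ≤
      -(lam2 ^ 2 / (2 * ((N : ℝ) - 1))) *
        Real.sqrt (∑ e : Fin m, ‖x (a e) - x (b e)‖ ^ 2) *
        (Real.sqrt (∑ e : Fin m, ‖x (a e) - x (b e)‖ ^ 2) -
          (2 * Real.sqrt N * ((N : ℝ) - 1) * matOpNorm (incidenceMat a b)ᵀ / lam2 ^ 2)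
            * vmax) :=
  statement3_general N m n hN G a b hab huniq lam2 hlam2 hvar vmax x v hv
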